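/- Let Γ be a finite simplicial graph whose vertices are labeled by nontrivial cyclic groups, let G_Γ be the associated graph product, and let W_Γ be the right-angled Coxeter group obtained by replacing each vertex group G_v with ℤ/2ℤ, with generator s_v for each vertex v. Then for every g ∈ G_Γ the following hold: (a) if g₁⋯g_k is any reduced word for g with g_i a nontrivial element of the vertex group G_{v_i}, then the element γ(g) := s_{v₁}s_{v₂}⋯s_{v_k} of W_Γ does not depend on the choice of reduced word; and (b) the word s_{v₁}⋯s_{v_k} is reduced in W_Γ, i.e. the word length of γ(g) with respect to the generating set {s_v : v ∈ V} equals k, the reduced length of g. -/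

import Mathlib

open Monoid

namespace ArXiv

universe u uG

variable {V : Type u}

/-- The star of a vertex: the vertex together with its neighbors. -/
def star (Γ : SimpleGraph V) (v : V) : Set V := insert v (Γ.neighborSet v)

/-- `C ⊆ V` is the vertex set of a connected component of the full subgraph of `Γ`
induced on `S`. -/
def IsCompOf (Γ : SimpleGraph V) (S : Set V) (C : Set V) : Prop :=
  ∃ c : (Γ.induce S).ConnectedComponent, C = Subtype.val '' c.supp

/-- `Γ` has a separating intersection of links: there are distinct non-adjacent vertices
`v, w` such that some connected component of `Γ ∖ (lk(v) ∩ lk(w))` contains neither `v`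
nor `w`. -/
def HasSIL (Γ : SimpleGraph V) : Prop :=
  ∃ v w : V, v ≠ w ∧ ¬ Γ.Adj v w ∧
    ∃ C : Set V, IsCompOf Γ ((Γ.neighborSet v ∩ Γ.neighborSet w)ᶜ) C ∧ v ∉ C ∧ w ∉ C

variable (Γ : SimpleGraph V) (G : V → Type uG) [∀ v, Group (G v)]

/-- The commutator relators defining the graph product. -/
def rels : Set (Monoid.CoprodI G) :=
  {x | ∃ (v w : V) (_ : Γ.Adj v w) (g : G v) (h : G w),
    x = CoprodI.of g * CoprodI.of h * (CoprodI.of g)⁻¹ * (CoprodI.of h)⁻¹}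

/-- The graph product of the vertex groups `G v` over the graph `Γ`: the quotient of the
free product by the normal closure of the commutators of adjacent vertex groups. -/
def GraphProduct : Type (max u uG) :=
  Monoid.CoprodI G ⧸ Subgroup.normalClosure (rels Γ G)

instance : Group (GraphProduct Γ G) :=
  inferInstanceAs (Group (Monoid.CoprodI G ⧸ Subgroup.normalClosure (rels Γ G)))

/-- The canonical map from a vertex group into the graph product. -/
def of {v : V} : G v →* GraphProduct Γ G :=
  (QuotientGroup.mk' (Subgroup.normalClosure (rels Γ G))).comp CoprodI.of

theorem of_commute {v w : V} (h : Γ.Adj v w) (g : G v) (k : G w) :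
    Commute (of Γ G g) (of Γ G k) := by
  rw [← commutatorElement_eq_one_iff_commute]
  have hmem : (CoprodI.of g * CoprodI.of k * (CoprodI.of g)⁻¹ * (CoprodI.of k)⁻¹ :
      Monoid.CoprodI G) ∈ Subgroup.normalClosure (rels Γ G) :=
    Subgroup.subset_normalClosure ⟨v, w, h, g, k, rfl⟩
  have h1 : (QuotientGroup.mk' (Subgroup.normalClosure (rels Γ G)))
      (CoprodI.of g * CoprodI.of k * (CoprodI.of g)⁻¹ * (CoprodI.of k)⁻¹) = 1 :=
    (QuotientGroup.eq_one_iff _).mpr hmem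
  simp only [map_mul, map_inv] at h1
  rw [commutatorElement_def]
  exact h1

/-- `π` is the partial conjugation `π_{v,C}`, for vertex groups with chosen generators
`gen`: it conjugates the generators in `C` by (the generator of) `v` and fixes all other
generators. -/
def IsPartialConj (gen : ∀ v, G v) (π : MulAut (GraphProduct Γ G)) (v : V) (C : Set V) :
    Prop :=
  (∀ u ∈ C, ∀ g : G u, π (of Γ G g) = of Γ G (gen v) * of Γ G g * (of Γ G (gen v))⁻¹) ∧
  (∀ u ∉ C, ∀ g : G u, π (of Γ G g) = of Γ G g)

/-- `π` is the partial conjugation `π_{a,C}` by the element `a` of the vertex group `G v`: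
it conjugates the vertex groups in `C` by `a` and fixes all other vertex groups. -/
def IsPartialConjBy {v : V} (a : G v) (π : MulAut (GraphProduct Γ G)) (C : Set V) : Prop :=
  (∀ u ∈ C, ∀ g : G u, π (of Γ G g) = of Γ G a * of Γ G g * (of Γ G a)⁻¹) ∧
  (∀ u ∉ C, ∀ g : G u, π (of Γ G g) = of Γ G g)

/-- The vertex set of the graph `Γ̃`: pairs `p_{v,C}` where `C` is a connected component
of `Γ ∖ st(v)`. -/
def TV : Type u := {p : V × Set V // IsCompOf Γ ((star Γ p.1)ᶜ) p.2}

/-- The graph `Γ̃`: vertices `p_{v,C}` and `p_{w,D}` are joined by an edge unless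
`v, w` are distinct non-adjacent vertices with `v ∈ D` and `w ∈ C`. -/
def tilde : SimpleGraph (TV Γ) where
  Adj p q := p ≠ q ∧
    ¬(p.1.1 ≠ q.1.1 ∧ ¬ Γ.Adj p.1.1 q.1.1 ∧ p.1.1 ∈ q.1.2 ∧ q.1.1 ∈ p.1.2)
  symm := ⟨by
    rintro p q ⟨h1, h2⟩
    exact ⟨h1.symm, fun ⟨a, b, c, d⟩ => h2 ⟨a.symm, fun e => b e.symm, d, c⟩⟩⟩
  loopless := ⟨fun p h => h.1 rfl⟩

/-- The graph product `G_{Γ̃}`, where the vertex `p_{v,C}` is labeled by (a copy of) the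
group `G v`. -/
abbrev TildeProduct : Type (max u uG) :=
  GraphProduct (tilde Γ) (fun p : TV Γ => G p.1.1)

/-- The element `p_v = ∏_C p_{v,C} ∈ G_{Γ̃}`, the product over all connected components
`C` of `Γ ∖ st(v)` (the factors pairwise commute). -/
noncomputable def pvert [Finite V] (gen : ∀ v, G v) (v : V) : TildeProduct Γ G :=
  haveI : Fintype {C : Set V // IsCompOf Γ ((star Γ v)ᶜ) C} := Fintype.ofFinite _
  Finset.noncommProd (Finset.univ : Finset {C : Set V // IsCompOf Γ ((star Γ v)ᶜ) C})
    (fun c => of (tilde Γ) (fun p : TV Γ => G p.1.1) (v := ⟨(v, c.1), c.2⟩) (gen v))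
    (by
      intro a _ b _ hab
      have hadj : (tilde Γ).Adj ⟨(v, a.1), a.2⟩ ⟨(v, b.1), b.2⟩ := by
        refine ⟨fun h => hab (Subtype.ext (congrArg (fun x : TV Γ => x.1.2) h)), ?_⟩
        rintro ⟨hne, -⟩
        exact hne rfl
      exact of_commute (tilde Γ) (fun p : TV Γ => G p.1.1) hadj (gen v) (gen v))

/-- The set `Δ` of vertices adjacent to every other vertex of `Γ`. -/
def Delta (Γ : SimpleGraph V) : Set V := {v | ∀ u, u ≠ v → Γ.Adj v u}

/-- The subgroup of the graph product generated by the vertex groups `G v`, `v ∈ T`. -/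
def vertexSubgroup (T : Set V) : Subgroup (GraphProduct Γ G) :=
  Subgroup.closure {x | ∃ v ∈ T, ∃ g : G v, x = of Γ G g}

/-- `w` is a reduced word for the element `g` of the graph product: a minimal length
expression of `g` as a product of nontrivial elements of vertex groups. -/
def IsReducedWord (g : GraphProduct Γ G) (w : List (Σ v : V, G v)) : Prop :=
  (w.map fun l => of Γ G l.2).prod = g ∧ (∀ l ∈ w, l.2 ≠ 1) ∧
    ∀ w' : List (Σ v : V, G v), (w'.map fun l => of Γ G l.2).prod = g →
      w.length ≤ w'.length


end ArXiv

/-!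
The core is Green's normal form theorem. Call a word normal if its letters are nontrivial and
no letter at a vertex `v` is followed by another letter at `v` such that every letter in between
lies at a neighbour of `v`. Two normal words with the same product differ by swaps of adjacent
letters at adjacent vertices: the graph product acts on swap classes of normal words, a vertex
group `G v` acting by walking past the letters at neighbours of `v` and then merging into a letter
at `v` or prepending a new one, and the orbit map at the empty word sends the product of a normal
word back to its class. A word that is not normal can be shortened; hence reduced words are
normal, and, since swaps preserve length, normal words have minimal length.

Applied to `G_Γ`, this makes any two reduced words for `g` differ by swaps, which also commute in
`W_Γ`; this is (a). Normality only depends on the sequence of vertices, so `s_{v₁} ⋯ s_{v_k}` is a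
normal word of `W_Γ`, hence of minimal length; this is (b).
-/

-- Reopened so that the section variables of the definitions above go out of scope.
namespace ArXiv

universe u uG

section VertexLists

variable {V : Type u} (Γ : SimpleGraph V)

inductive CanMoveToFront (v : V) : List V → Prop
  | head (L : List V) : CanMoveToFront v (v :: L)
  | cons {u : V} {L : List V} : Γ.Adj u v → CanMoveToFront v L → CanMoveToFront v (u :: L)

inductive HasMergeablePair : List V → Prop
  | head {u : V} {L : List V} : CanMoveToFront Γ u L → HasMergeablePair (u :: L)
  | cons (u : V) {L : List V} : HasMergeablePair L → HasMergeablePair (u :: L)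

variable {Γ}

theorem canMoveToFront_cons_iff {v u : V} {L : List V} :
    CanMoveToFront Γ v (u :: L) ↔ u = v ∨ Γ.Adj u v ∧ CanMoveToFront Γ v L := by
  constructor
  · rintro (_ | ⟨huv, hL⟩)
    · exact .inl rfl
    · exact .inr ⟨huv, hL⟩
  · rintro (rfl | ⟨huv, hL⟩)
    · exact .head L
    · exact .cons huv hL

theorem CanMoveToFront.of_cons {v u : V} {L : List V} (h : CanMoveToFront Γ v (u :: L))
    (hu : u ≠ v) : CanMoveToFront Γ v L :=
  ((canMoveToFront_cons_iff.1 h).resolve_left hu).2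

theorem not_canMoveToFront_cons {v u : V} {L : List V} (hu : u ≠ v) (huv : ¬Γ.Adj u v) :
    ¬CanMoveToFront Γ v (u :: L) := by
  rw [canMoveToFront_cons_iff]
  tauto

end VertexLists

section Shuffles

variable {V : Type u} (Γ : SimpleGraph V) {G : V → Type uG}

inductive ShuffleStep : List (Σ v, G v) → List (Σ v, G v) → Prop
  | swap {x y : Σ v, G v} (q : List (Σ v, G v)) :
      Γ.Adj x.1 y.1 → ShuffleStep (x :: y :: q) (y :: x :: q)
  | cons (x : Σ v, G v) {w w' : List (Σ v, G v)} :
      ShuffleStep w w' → ShuffleStep (x :: w) (x :: w')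

def ShuffleEquiv : List (Σ v, G v) → List (Σ v, G v) → Prop :=
  Relation.ReflTransGen (ShuffleStep Γ)

variable {Γ}

theorem ShuffleStep.symm {w w' : List (Σ v, G v)} (h : ShuffleStep Γ w w') :
    ShuffleStep Γ w' w := by
  induction h with
  | swap q hxy => exact .swap q hxy.symm
  | cons x _ ih => exact .cons x ih

theorem ShuffleStep.perm {w w' : List (Σ v, G v)} (h : ShuffleStep Γ w w') : w.Perm w' := by
  induction h with
  | swap q _ => exact .swap _ _ q
  | cons x _ ih => exact ih.cons x

theorem ShuffleStep.map_prod_eq {M : Type*} [Monoid M] {F : (Σ v, G v) → M}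
    (hF : ∀ x y : Σ v, G v, Γ.Adj x.1 y.1 → Commute (F x) (F y)) {w w' : List (Σ v, G v)}
    (h : ShuffleStep Γ w w') : (w.map F).prod = (w'.map F).prod := by
  induction h with
  | swap q hxy => simp only [List.map_cons, List.prod_cons, (hF _ _ hxy).left_comm]
  | cons x _ ih => simp only [List.map_cons, List.prod_cons, ih]

theorem ShuffleStep.shuffleEquiv {w w' : List (Σ v, G v)} (h : ShuffleStep Γ w w') :
    ShuffleEquiv Γ w w' :=
  Relation.ReflTransGen.single h

namespace ShuffleEquiv

@[refl]
theorem refl (w : List (Σ v, G v)) : ShuffleEquiv Γ w w := Relation.ReflTransGen.refl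

theorem trans {w₁ w₂ w₃ : List (Σ v, G v)} (h₁ : ShuffleEquiv Γ w₁ w₂)
    (h₂ : ShuffleEquiv Γ w₂ w₃) : ShuffleEquiv Γ w₁ w₃ :=
  Relation.ReflTransGen.trans h₁ h₂

theorem symm {w w' : List (Σ v, G v)} (h : ShuffleEquiv Γ w w') : ShuffleEquiv Γ w' w := by
  induction h with
  | refl => rfl
  | tail _ hs ih => exact .head hs.symm ih

theorem cons (x : Σ v, G v) {w w' : List (Σ v, G v)} (h : ShuffleEquiv Γ w w') :
    ShuffleEquiv Γ (x :: w) (x :: w') :=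
  Relation.ReflTransGen.lift (x :: ·) (fun _ _ hs => hs.cons x) _ _ h

theorem perm {w w' : List (Σ v, G v)} (h : ShuffleEquiv Γ w w') : w.Perm w' := by
  induction h with
  | refl => rfl
  | tail _ hs ih => exact ih.trans hs.perm

theorem map_prod_eq {M : Type*} [Monoid M] {F : (Σ v, G v) → M}
    (hF : ∀ x y : Σ v, G v, Γ.Adj x.1 y.1 → Commute (F x) (F y)) {w w' : List (Σ v, G v)}
    (h : ShuffleEquiv Γ w w') : (w.map F).prod = (w'.map F).prod := by
  induction h with
  | refl => rfl
  | tail _ hs ih => exact ih.trans (hs.map_prod_eq hF)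

end ShuffleEquiv

end Shuffles

section Words

variable {V : Type u} {Γ : SimpleGraph V} {G : V → Type uG} [∀ v, Group (G v)]

variable (Γ) in
def wordProd (w : List (Σ v, G v)) : GraphProduct Γ G :=
  (w.map fun l => of Γ G l.2).prod

@[simp]
theorem wordProd_cons (x : Σ v, G v) (t : List (Σ v, G v)) :
    wordProd Γ (x :: t) = of Γ G x.2 * wordProd Γ t :=
  List.prod_cons

theorem wordProd_append (s t : List (Σ v, G v)) :
    wordProd Γ (s ++ t) = wordProd Γ s * wordProd Γ t := by
  simp [wordProd]

variable (Γ) in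
/-- Green's syntactic notion of a reduced word; by `IsReducedWord.isNormalWord` and
`IsNormalWord.length_le` it amounts to having minimal length. -/
structure IsNormalWord (w : List (Σ v, G v)) : Prop where
  ne_one : ∀ l ∈ w, l.2 ≠ 1
  not_hasMergeablePair : ¬HasMergeablePair Γ (w.map Sigma.fst)

theorem isNormalWord_nil : IsNormalWord Γ ([] : List (Σ v, G v)) :=
  ⟨nofun, nofun⟩

theorem isNormalWord_cons_iff {x : Σ v, G v} {t : List (Σ v, G v)} :
    IsNormalWord Γ (x :: t) ↔
      x.2 ≠ 1 ∧ ¬CanMoveToFront Γ x.1 (t.map Sigma.fst) ∧ IsNormalWord Γ t := by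
  constructor
  · rintro ⟨hne, hm⟩
    exact ⟨hne x (List.mem_cons_self ..), fun h => hm (.head h),
      fun l hl => hne l (List.mem_cons_of_mem _ hl), fun h => hm (.cons _ h)⟩
  · rintro ⟨hx, hfront, ht⟩
    refine ⟨fun l hl => ?_, ?_⟩
    · rcases List.mem_cons.1 hl with rfl | hl
      exacts [hx, ht.ne_one l hl]
    · rintro (h | ⟨_, h⟩)
      exacts [hfront h, ht.not_hasMergeablePair h]

theorem CanMoveToFront.exists_wordProd_eq {v : V} {t : List (Σ v, G v)}
    (h : CanMoveToFront Γ v (t.map Sigma.fst)) :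
    ∃ (a : G v) (t' : List (Σ v, G v)),
      t'.length + 1 = t.length ∧ wordProd Γ t = of Γ G a * wordProd Γ t' := by
  induction t with
  | nil => cases h
  | cons x t ih =>
    obtain ⟨u, b⟩ := x
    rcases canMoveToFront_cons_iff.1 h with rfl | ⟨huv, h⟩
    · exact ⟨b, t, rfl, rfl⟩
    · obtain ⟨a, t', hlen, hprod⟩ := ih h
      refine ⟨a, ⟨u, b⟩ :: t', by simp [hlen], ?_⟩
      simp only [wordProd_cons, hprod, (of_commute Γ G huv b a).left_comm]

theorem HasMergeablePair.exists_shorter {w : List (Σ v, G v)}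
    (h : HasMergeablePair Γ (w.map Sigma.fst)) :
    ∃ w' : List (Σ v, G v), w'.length < w.length ∧ wordProd Γ w' = wordProd Γ w := by
  induction w with
  | nil => cases h
  | cons x t ih =>
    obtain ⟨v, g⟩ := x
    rcases h with h | ⟨_, h⟩
    · obtain ⟨a, t', hlen, hprod⟩ := h.exists_wordProd_eq
      exact ⟨⟨v, g * a⟩ :: t', by simp [← hlen], by simp [hprod, mul_assoc]⟩
    · obtain ⟨t', hlen, hprod⟩ := ih h
      exact ⟨⟨v, g⟩ :: t', by simp [hlen], by simp [hprod]⟩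

theorem exists_shorter_of_not_isNormalWord {w : List (Σ v, G v)} (h : ¬IsNormalWord Γ w) :
    ∃ w' : List (Σ v, G v), w'.length < w.length ∧ wordProd Γ w' = wordProd Γ w := by
  by_cases hne : ∀ l ∈ w, l.2 ≠ 1
  · exact HasMergeablePair.exists_shorter (not_not.1 fun hm => h ⟨hne, hm⟩)
  · push Not at hne
    obtain ⟨l, hl, hl1⟩ := hne
    obtain ⟨s, t, rfl⟩ := List.append_of_mem hl
    exact ⟨s ++ t, by simp, by simp [wordProd_append, hl1]⟩

theorem IsReducedWord.isNormalWord {g : GraphProduct Γ G} {w : List (Σ v, G v)}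
    (hw : IsReducedWord Γ G g w) : IsNormalWord Γ w := by
  by_contra h
  obtain ⟨w', hlen, hprod⟩ := exists_shorter_of_not_isNormalWord h
  exact (hw.2.2 w' (hprod.trans hw.1)).not_gt hlen

theorem exists_isNormalWord (w : List (Σ v, G v)) :
    ∃ w', IsNormalWord Γ w' ∧ wordProd Γ w' = wordProd Γ w ∧ w'.length ≤ w.length := by
  induction hn : w.length using Nat.strong_induction_on generalizing w with
  | _ n ih =>
    by_cases hw : IsNormalWord Γ w
    · exact ⟨w, hw, rfl, hn.le⟩
    · obtain ⟨w', hlen, hprod⟩ := exists_shorter_of_not_isNormalWord hw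
      obtain ⟨w'', hw'', hprod', hlen'⟩ := ih _ (hn ▸ hlen) w' rfl
      exact ⟨w'', hw'', hprod'.trans hprod, by omega⟩

end Words

section MulVertex

variable {V : Type u} {Γ : SimpleGraph V} {G : V → Type uG} [∀ v, Group (G v)]

open scoped Classical in
noncomputable def consNeOne (x : Σ v, G v) (t : List (Σ v, G v)) : List (Σ v, G v) :=
  if x.2 = 1 then t else x :: t

theorem consNeOne_of_eq_one {x : Σ v, G v} (hx : x.2 = 1) (t : List (Σ v, G v)) :
    consNeOne x t = t :=
  if_pos hx

theorem consNeOne_of_ne_one {x : Σ v, G v} (hx : x.2 ≠ 1) (t : List (Σ v, G v)) :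
    consNeOne x t = x :: t :=
  if_neg hx

theorem ShuffleEquiv.consNeOne (x : Σ v, G v) {t t' : List (Σ v, G v)}
    (h : ShuffleEquiv Γ t t') : ShuffleEquiv Γ (consNeOne x t) (consNeOne x t') := by
  by_cases hx : x.2 = 1
  · simpa only [consNeOne_of_eq_one hx] using h
  · simpa only [consNeOne_of_ne_one hx] using h.cons x

theorem consNeOne_cons_shuffleEquiv {x y : Σ v, G v} (q : List (Σ v, G v))
    (hxy : Γ.Adj x.1 y.1) : ShuffleEquiv Γ (consNeOne x (y :: q)) (y :: consNeOne x q) := by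
  by_cases hx : x.2 = 1
  · simp only [consNeOne_of_eq_one hx]; rfl
  · simpa only [consNeOne_of_ne_one hx] using (ShuffleStep.swap q hxy).shuffleEquiv

theorem consNeOne_comm {x y : Σ v, G v} (t : List (Σ v, G v)) (hxy : Γ.Adj x.1 y.1) :
    ShuffleEquiv Γ (consNeOne x (consNeOne y t)) (consNeOne y (consNeOne x t)) := by
  by_cases hy : y.2 = 1
  · simp only [consNeOne_of_eq_one hy]; rfl
  · simpa only [consNeOne_of_ne_one hy] using consNeOne_cons_shuffleEquiv t hxy

theorem CanMoveToFront.of_consNeOne {u : V} {x : Σ v, G v} {t : List (Σ v, G v)}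
    (h : CanMoveToFront Γ u ((consNeOne x t).map Sigma.fst)) (hx : x.1 ≠ u) :
    CanMoveToFront Γ u (t.map Sigma.fst) := by
  by_cases hx1 : x.2 = 1
  · rwa [consNeOne_of_eq_one hx1] at h
  · rw [consNeOne_of_ne_one hx1] at h
    exact h.of_cons hx

theorem IsNormalWord.consNeOne {x : Σ v, G v} {t : List (Σ v, G v)} (ht : IsNormalWord Γ t)
    (hx : ¬CanMoveToFront Γ x.1 (t.map Sigma.fst)) : IsNormalWord Γ (consNeOne x t) := by
  by_cases hx1 : x.2 = 1
  · rwa [consNeOne_of_eq_one hx1]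
  · rw [consNeOne_of_ne_one hx1]
    exact isNormalWord_cons_iff.2 ⟨hx1, hx, ht⟩

variable (Γ) in
open scoped Classical in
noncomputable def mulVertex (v : V) (g : G v) : List (Σ u, G u) → List (Σ u, G u)
  | [] => consNeOne ⟨v, g⟩ []
  | ⟨u, a⟩ :: t =>
    if h : u = v then consNeOne ⟨v, g * h ▸ a⟩ t
    else if Γ.Adj u v then ⟨u, a⟩ :: mulVertex v g t
    else consNeOne ⟨v, g⟩ (⟨u, a⟩ :: t)

theorem mulVertex_nil (v : V) (g : G v) : mulVertex Γ v g [] = consNeOne ⟨v, g⟩ [] := rfl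

theorem mulVertex_cons_self {v : V} (g a : G v) (t : List (Σ u, G u)) :
    mulVertex Γ v g (⟨v, a⟩ :: t) = consNeOne ⟨v, g * a⟩ t := by
  simp [mulVertex]

theorem mulVertex_cons_of_adj {u v : V} (g : G v) (a : G u) (t : List (Σ u, G u))
    (huv : Γ.Adj u v) : mulVertex Γ v g (⟨u, a⟩ :: t) = ⟨u, a⟩ :: mulVertex Γ v g t := by
  simp [mulVertex, huv.ne, huv]

theorem mulVertex_cons_of_not_adj {u v : V} (g : G v) (a : G u) (t : List (Σ u, G u))
    (hu : u ≠ v) (huv : ¬Γ.Adj u v) :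
    mulVertex Γ v g (⟨u, a⟩ :: t) = consNeOne ⟨v, g⟩ (⟨u, a⟩ :: t) := by
  simp [mulVertex, hu, huv]

theorem mulVertex_consNeOne_of_adj {u v : V} (g : G v) (a : G u) (t : List (Σ u, G u))
    (huv : Γ.Adj u v) :
    mulVertex Γ v g (consNeOne ⟨u, a⟩ t) = consNeOne ⟨u, a⟩ (mulVertex Γ v g t) := by
  by_cases ha : a = 1
  · simp only [consNeOne_of_eq_one (x := ⟨u, a⟩) ha]
  · simp only [consNeOne_of_ne_one (x := ⟨u, a⟩) ha, mulVertex_cons_of_adj _ _ _ huv]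

theorem mulVertex_one {v : V} {w : List (Σ u, G u)} (hw : ∀ l ∈ w, l.2 ≠ 1) :
    mulVertex Γ v 1 w = w := by
  induction w with
  | nil => exact consNeOne_of_eq_one rfl _
  | cons x t ih =>
    obtain ⟨u, a⟩ := x
    by_cases hu : u = v
    · subst hu
      rw [mulVertex_cons_self, one_mul, consNeOne_of_ne_one (hw _ List.mem_cons_self)]
    · by_cases huv : Γ.Adj u v
      · rw [mulVertex_cons_of_adj _ _ _ huv, ih fun l hl => hw l (List.mem_cons_of_mem _ hl)]
      · rw [mulVertex_cons_of_not_adj _ _ _ hu huv, consNeOne_of_eq_one rfl]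

theorem CanMoveToFront.of_mulVertex {u v : V} (huv : Γ.Adj u v) {g : G v}
    {t : List (Σ u, G u)} (h : CanMoveToFront Γ u ((mulVertex Γ v g t).map Sigma.fst)) :
    CanMoveToFront Γ u (t.map Sigma.fst) := by
  induction t with
  | nil => exact h.of_consNeOne huv.ne'
  | cons x t ih =>
    obtain ⟨z, a⟩ := x
    by_cases hz : z = v
    · subst hz
      rw [mulVertex_cons_self] at h
      exact .cons huv.symm (h.of_consNeOne huv.ne')
    · by_cases hzv : Γ.Adj z v
      · rw [mulVertex_cons_of_adj _ _ _ hzv, List.map_cons, canMoveToFront_cons_iff] at h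
        rcases h with rfl | ⟨hzu, h⟩
        exacts [.head _, .cons hzu (ih h)]
      · rw [mulVertex_cons_of_not_adj _ _ _ hz hzv] at h
        exact h.of_consNeOne huv.ne'

theorem IsNormalWord.mulVertex {v : V} (g : G v) {w : List (Σ u, G u)}
    (hw : IsNormalWord Γ w) : IsNormalWord Γ (mulVertex Γ v g w) := by
  induction w with
  | nil => exact isNormalWord_nil.consNeOne nofun
  | cons x t ih =>
    obtain ⟨z, a⟩ := x
    obtain ⟨ha, hfront, ht⟩ := isNormalWord_cons_iff.1 hw
    by_cases hz : z = v
    · subst hz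
      rw [mulVertex_cons_self]
      exact ht.consNeOne hfront
    · by_cases hzv : Γ.Adj z v
      · rw [mulVertex_cons_of_adj _ _ _ hzv]
        exact isNormalWord_cons_iff.2 ⟨ha, fun h => hfront (h.of_mulVertex hzv), ih ht⟩
      · rw [mulVertex_cons_of_not_adj _ _ _ hz hzv]
        exact hw.consNeOne (not_canMoveToFront_cons hz hzv)

theorem mulVertex_shuffleEquiv_consNeOne {v : V} (g : G v) {t : List (Σ u, G u)}
    (ht : ¬CanMoveToFront Γ v (t.map Sigma.fst)) :
    ShuffleEquiv Γ (mulVertex Γ v g t) (consNeOne ⟨v, g⟩ t) := by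
  induction t with
  | nil => rfl
  | cons x t ih =>
    obtain ⟨z, a⟩ := x
    rw [List.map_cons, canMoveToFront_cons_iff, not_or, not_and] at ht
    by_cases hzv : Γ.Adj z v
    · rw [mulVertex_cons_of_adj _ _ _ hzv]
      exact ((ih (ht.2 hzv)).cons _).trans (consNeOne_cons_shuffleEquiv _ hzv.symm).symm
    · rw [mulVertex_cons_of_not_adj _ _ _ ht.1 hzv]

theorem mulVertex_consNeOne_self {v : V} (g h : G v) {t : List (Σ u, G u)}
    (ht : ¬CanMoveToFront Γ v (t.map Sigma.fst)) :
    ShuffleEquiv Γ (mulVertex Γ v g (consNeOne ⟨v, h⟩ t)) (consNeOne ⟨v, g * h⟩ t) := by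
  by_cases h1 : h = 1
  · subst h1
    rw [consNeOne_of_eq_one rfl, mul_one]
    exact mulVertex_shuffleEquiv_consNeOne g ht
  · rw [consNeOne_of_ne_one h1, mulVertex_cons_self]

theorem mulVertex_mul {v : V} (g h : G v) {w : List (Σ u, G u)} (hw : IsNormalWord Γ w) :
    ShuffleEquiv Γ (mulVertex Γ v g (mulVertex Γ v h w)) (mulVertex Γ v (g * h) w) := by
  induction w with
  | nil => exact mulVertex_consNeOne_self g h nofun
  | cons x t ih =>
    obtain ⟨z, a⟩ := x
    obtain ⟨-, hfront, ht⟩ := isNormalWord_cons_iff.1 hw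
    by_cases hz : z = v
    · subst hz
      rw [mulVertex_cons_self, mulVertex_cons_self, mul_assoc]
      exact mulVertex_consNeOne_self g (h * a) hfront
    · by_cases hzv : Γ.Adj z v
      · simp only [mulVertex_cons_of_adj _ _ _ hzv]
        exact (ih ht).cons _
      · simp only [mulVertex_cons_of_not_adj _ _ _ hz hzv]
        exact mulVertex_consNeOne_self g h (not_canMoveToFront_cons hz hzv)

theorem mulVertex_comm {u v : V} (huv : Γ.Adj u v) (g : G u) (h : G v) {w : List (Σ x, G x)}
    (hw : IsNormalWord Γ w) :
    ShuffleEquiv Γ (mulVertex Γ u g (mulVertex Γ v h w)) (mulVertex Γ v h (mulVertex Γ u g w)) := by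
  have hvu := huv.symm
  induction w with
  | nil =>
    simp only [mulVertex_nil, mulVertex_consNeOne_of_adj _ _ _ huv,
      mulVertex_consNeOne_of_adj _ _ _ hvu]
    exact consNeOne_comm _ hvu
  | cons x t ih =>
    obtain ⟨z, a⟩ := x
    by_cases hz : z = v
    · subst hz
      simp only [mulVertex_cons_self, mulVertex_cons_of_adj _ _ _ hvu,
        mulVertex_consNeOne_of_adj _ _ _ hvu]
      rfl
    by_cases hz' : z = u
    · subst hz'
      simp only [mulVertex_cons_self, mulVertex_cons_of_adj _ _ _ huv,
        mulVertex_consNeOne_of_adj _ _ _ huv]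
      rfl
    by_cases hzv : Γ.Adj z v <;> by_cases hzu : Γ.Adj z u
    · simp only [mulVertex_cons_of_adj _ _ _ hzv, mulVertex_cons_of_adj _ _ _ hzu]
      exact (ih (isNormalWord_cons_iff.1 hw).2.2).cons _
    · simp only [mulVertex_cons_of_adj _ _ _ hzv, mulVertex_cons_of_not_adj _ _ _ hz' hzu,
        mulVertex_consNeOne_of_adj _ _ _ huv]
      rfl
    · simp only [mulVertex_cons_of_adj _ _ _ hzu, mulVertex_cons_of_not_adj _ _ _ hz hzv,
        mulVertex_consNeOne_of_adj _ _ _ hvu]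
      rfl
    · simp only [mulVertex_cons_of_not_adj _ _ _ hz hzv, mulVertex_cons_of_not_adj _ _ _ hz' hzu,
        mulVertex_consNeOne_of_adj _ _ _ huv, mulVertex_consNeOne_of_adj _ _ _ hvu]
      exact consNeOne_comm _ hvu

theorem mulVertex_swap {v : V} (g : G v) {x y : Σ u, G u} (q : List (Σ u, G u))
    (hxy : Γ.Adj x.1 y.1) :
    ShuffleEquiv Γ (mulVertex Γ v g (x :: y :: q)) (mulVertex Γ v g (y :: x :: q)) := by
  obtain ⟨zx, a⟩ := x
  obtain ⟨zy, b⟩ := y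
  have hyx : Γ.Adj zy zx := hxy.symm
  by_cases hx : zx = v
  · subst hx
    rw [mulVertex_cons_self, mulVertex_cons_of_adj _ _ _ hyx, mulVertex_cons_self]
    exact consNeOne_cons_shuffleEquiv q hxy
  by_cases hy : zy = v
  · subst hy
    rw [mulVertex_cons_self, mulVertex_cons_of_adj _ _ _ hxy, mulVertex_cons_self]
    exact (consNeOne_cons_shuffleEquiv q hyx).symm
  have hswap : ShuffleEquiv Γ (⟨zx, a⟩ :: ⟨zy, b⟩ :: q) (⟨zy, b⟩ :: ⟨zx, a⟩ :: q) :=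
    (ShuffleStep.swap q hxy).shuffleEquiv
  by_cases hxv : Γ.Adj zx v <;> by_cases hyv : Γ.Adj zy v
  · simp only [mulVertex_cons_of_adj _ _ _ hxv, mulVertex_cons_of_adj _ _ _ hyv]
    exact (ShuffleStep.swap _ hxy).shuffleEquiv
  · rw [mulVertex_cons_of_adj _ _ _ hxv, mulVertex_cons_of_not_adj _ _ _ hy hyv,
      mulVertex_cons_of_not_adj _ _ _ hy hyv]
    exact (consNeOne_cons_shuffleEquiv _ hxv.symm).symm.trans (hswap.consNeOne _)
  · rw [mulVertex_cons_of_not_adj _ _ _ hx hxv, mulVertex_cons_of_adj _ _ _ hyv,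
      mulVertex_cons_of_not_adj _ _ _ hx hxv]
    exact (hswap.consNeOne _).trans (consNeOne_cons_shuffleEquiv _ hyv.symm)
  · rw [mulVertex_cons_of_not_adj _ _ _ hx hxv, mulVertex_cons_of_not_adj _ _ _ hy hyv]
    exact hswap.consNeOne _

theorem ShuffleStep.mulVertex {v : V} (g : G v) {w w' : List (Σ u, G u)}
    (h : ShuffleStep Γ w w') : ShuffleEquiv Γ (mulVertex Γ v g w) (mulVertex Γ v g w') := by
  induction h with
  | swap q hxy => exact mulVertex_swap g q hxy
  | cons x hs ih =>
    obtain ⟨z, a⟩ := x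
    by_cases hz : z = v
    · subst hz
      simpa only [mulVertex_cons_self] using hs.shuffleEquiv.consNeOne _
    by_cases hzv : Γ.Adj z v
    · simpa only [mulVertex_cons_of_adj _ _ _ hzv] using ih.cons _
    · simpa only [mulVertex_cons_of_not_adj _ _ _ hz hzv] using
        (hs.shuffleEquiv.cons _).consNeOne _

theorem ShuffleEquiv.mulVertex {v : V} (g : G v) {w w' : List (Σ u, G u)}
    (h : ShuffleEquiv Γ w w') : ShuffleEquiv Γ (mulVertex Γ v g w) (mulVertex Γ v g w') := by
  induction h with
  | refl => rfl
  | tail _ hs ih => exact ih.trans (hs.mulVertex g)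

end MulVertex

section Lift

variable {V : Type u} {Γ : SimpleGraph V} {G : V → Type uG} [∀ v, Group (G v)]
  {M : Type*} [Group M]

def GraphProduct.lift (f : ∀ v, G v →* M)
    (hf : ∀ u v, Γ.Adj u v → ∀ (g : G u) (h : G v), Commute (f u g) (f v h)) :
    GraphProduct Γ G →* M :=
  QuotientGroup.lift _ (CoprodI.lift f) <| Subgroup.normalClosure_le_normal <| by
    rintro _ ⟨u, v, huv, g, h, rfl⟩
    simpa [commutatorElement_def] using (hf u v huv g h).commutator_eq

theorem GraphProduct.lift_of (f : ∀ v, G v →* M)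
    (hf : ∀ u v, Γ.Adj u v → ∀ (g : G u) (h : G v), Commute (f u g) (f v h)) {v : V}
    (g : G v) : GraphProduct.lift f hf (of Γ G g) = f v g :=
  CoprodI.lift_of f g

end Lift

section NormalForm

variable {V : Type u} (Γ : SimpleGraph V) (G : V → Type uG) [∀ v, Group (G v)]

abbrev NormalWord : Type (max u uG) := {w : List (Σ v, G v) // IsNormalWord Γ w}

instance NormalWord.setoid : Setoid (NormalWord Γ G) where
  r w w' := ShuffleEquiv Γ w.1 w'.1
  iseqv := ⟨fun w => .refl w.1, .symm, .trans⟩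

abbrev NormalForm : Type (max u uG) := Quotient (NormalWord.setoid Γ G)

variable {Γ G}

namespace NormalForm

noncomputable def mulVertex (v : V) (g : G v) : NormalForm Γ G → NormalForm Γ G :=
  Quotient.map (fun w => ⟨ArXiv.mulVertex Γ v g w.1, w.2.mulVertex g⟩)
    fun _ _ h => h.mulVertex g

theorem mulVertex_mk (v : V) (g : G v) (w : NormalWord Γ G) :
    mulVertex v g ⟦w⟧ = ⟦⟨ArXiv.mulVertex Γ v g w.1, w.2.mulVertex g⟩⟧ :=
  rfl

theorem mulVertex_one (v : V) (x : NormalForm Γ G) : mulVertex v 1 x = x := by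
  induction x using Quotient.ind with
  | _ w => exact congrArg (⟦·⟧) (Subtype.ext (ArXiv.mulVertex_one w.2.ne_one))

theorem mulVertex_mul (v : V) (g h : G v) (x : NormalForm Γ G) :
    mulVertex v g (mulVertex v h x) = mulVertex v (g * h) x := by
  induction x using Quotient.ind with
  | _ w => exact Quotient.sound (ArXiv.mulVertex_mul g h w.2)

theorem mulVertex_comm {u v : V} (huv : Γ.Adj u v) (g : G u) (h : G v) (x : NormalForm Γ G) :
    mulVertex u g (mulVertex v h x) = mulVertex v h (mulVertex u g x) := by
  induction x using Quotient.ind with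
  | _ w => exact Quotient.sound (ArXiv.mulVertex_comm huv g h w.2)

end NormalForm

noncomputable def vertexPerm (v : V) : G v →* Equiv.Perm (NormalForm Γ G) :=
  letI : MulAction (G v) (NormalForm Γ G) :=
    { smul := NormalForm.mulVertex v
      one_smul := NormalForm.mulVertex_one v
      mul_smul := fun g h x => (NormalForm.mulVertex_mul v g h x).symm }
  MulAction.toPermHom (G v) (NormalForm Γ G)

theorem vertexPerm_apply (v : V) (g : G v) (x : NormalForm Γ G) :
    vertexPerm v g x = NormalForm.mulVertex v g x :=
  rfl

variable (Γ G) in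
noncomputable def normalFormAction : GraphProduct Γ G →* Equiv.Perm (NormalForm Γ G) :=
  GraphProduct.lift vertexPerm fun _ _ huv g h =>
    Equiv.ext (NormalForm.mulVertex_comm huv g h)

theorem normalFormAction_of {v : V} (g : G v) :
    normalFormAction Γ G (of Γ G g) = vertexPerm v g :=
  GraphProduct.lift_of _ _ g

theorem normalFormAction_wordProd {w : List (Σ v, G v)} (hw : IsNormalWord Γ w) :
    normalFormAction Γ G (wordProd Γ w) ⟦⟨[], isNormalWord_nil⟩⟧ = ⟦⟨w, hw⟩⟧ := by
  induction w with
  | nil => rfl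
  | cons x t ih =>
    obtain ⟨hx, hfront, ht⟩ := isNormalWord_cons_iff.1 hw
    rw [wordProd_cons, map_mul, Equiv.Perm.mul_apply, ih ht, normalFormAction_of,
      vertexPerm_apply, NormalForm.mulVertex_mk]
    refine Quotient.sound ?_
    show ShuffleEquiv Γ _ _
    simpa only [consNeOne_of_ne_one hx] using mulVertex_shuffleEquiv_consNeOne x.2 hfront

theorem shuffleEquiv_of_wordProd_eq {w w' : List (Σ v, G v)} (hw : IsNormalWord Γ w)
    (hw' : IsNormalWord Γ w') (h : wordProd Γ w = wordProd Γ w') : ShuffleEquiv Γ w w' :=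
  Quotient.exact <|
    (normalFormAction_wordProd hw).symm.trans (h ▸ normalFormAction_wordProd hw')

theorem IsNormalWord.length_le {w w' : List (Σ v, G v)} (hw : IsNormalWord Γ w)
    (h : wordProd Γ w = wordProd Γ w') : w.length ≤ w'.length := by
  obtain ⟨w'', hw'', hprod, hlen⟩ := exists_isNormalWord (Γ := Γ) w'
  exact (shuffleEquiv_of_wordProd_eq hw hw'' (h.trans hprod.symm)).perm.length_eq.trans_le hlen

end NormalForm

theorem gamma_well_defined_and_reduced_general {V : Type u} (Γ : SimpleGraph V)
    (G : V → Type uG) [∀ v, Group (G v)]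
    (g : GraphProduct Γ G) (w w' : List (Σ v : V, G v))
    (hw : IsReducedWord Γ G g w) (hw' : IsReducedWord Γ G g w') :
    ((w.map fun l => of Γ (fun _ : V => Multiplicative (ZMod 2)) (v := l.1)
        (Multiplicative.ofAdd (1 : ZMod 2))).prod =
      (w'.map fun l => of Γ (fun _ : V => Multiplicative (ZMod 2)) (v := l.1)
        (Multiplicative.ofAdd (1 : ZMod 2))).prod) ∧
    ∀ ws : List V,
      ((ws.map fun u => of Γ (fun _ : V => Multiplicative (ZMod 2)) (v := u)
          (Multiplicative.ofAdd (1 : ZMod 2))).prod =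
        (w.map fun l => of Γ (fun _ : V => Multiplicative (ZMod 2)) (v := l.1)
          (Multiplicative.ofAdd (1 : ZMod 2))).prod) →
      w.length ≤ ws.length := by
  have hshuffle : ShuffleEquiv Γ w w' :=
    shuffleEquiv_of_wordProd_eq hw.isNormalWord hw'.isNormalWord (hw.1.trans hw'.1.symm)
  refine ⟨hshuffle.map_prod_eq fun _ _ h => of_commute Γ _ h _ _, fun ws hws => ?_⟩
  let s : Multiplicative (ZMod 2) := Multiplicative.ofAdd 1
  have hs : s ≠ 1 := by decide
  have hnormal :
      IsNormalWord Γ (w.map fun l => (⟨l.1, s⟩ : Σ _ : V, Multiplicative (ZMod 2))) := by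
    refine ⟨fun l hl => ?_, by simpa [Function.comp_def] using hw.isNormalWord.2⟩
    obtain ⟨_, -, rfl⟩ := List.mem_map.1 hl
    exact hs
  simpa using hnormal.length_le (w' := ws.map fun u => ⟨u, s⟩)
    (by simpa [wordProd, Function.comp_def] using hws.symm)

/-- The map `γ : G_Γ → W_Γ` replacing each letter of a reduced word by
the corresponding right-angled Coxeter generator is well defined ((a): independent of the
choice of reduced word) and length preserving ((b): the image of a reduced word of length
`k` is a word of minimal length `k` in the Coxeter generators). -/
theorem gamma_well_defined_and_reduced {V : Type u} [Finite V] (Γ : SimpleGraph V)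
    (G : V → Type uG) [∀ v, Group (G v)] [∀ v, Nontrivial (G v)]
    (gen : ∀ v, G v) (hgen : ∀ v, Subgroup.zpowers (gen v) = ⊤)
    (g : GraphProduct Γ G) (w w' : List (Σ v : V, G v))
    (hw : IsReducedWord Γ G g w) (hw' : IsReducedWord Γ G g w') :
    ((w.map fun l => of Γ (fun _ : V => Multiplicative (ZMod 2)) (v := l.1)
        (Multiplicative.ofAdd (1 : ZMod 2))).prod =
      (w'.map fun l => of Γ (fun _ : V => Multiplicative (ZMod 2)) (v := l.1)
        (Multiplicative.ofAdd (1 : ZMod 2))).prod) ∧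
    ∀ ws : List V,
      ((ws.map fun u => of Γ (fun _ : V => Multiplicative (ZMod 2)) (v := u)
          (Multiplicative.ofAdd (1 : ZMod 2))).prod =
        (w.map fun l => of Γ (fun _ : V => Multiplicative (ZMod 2)) (v := l.1)
          (Multiplicative.ofAdd (1 : ZMod 2))).prod) →
      w.length ≤ ws.length :=
  gamma_well_defined_and_reduced_general Γ G g w w' hw hw'

end ArXiv
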